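/- arXiv:2003.14181 — 8 statements merged into one kernel-verified Lean document; each statement's English description precedes it below -/
import Mathlib

section
/- Let L = 2·c_max²/|z_s − z_r| and let 0 < λ < λ₀. Assume c_max − c_* > L·λ. Then for every c ∈ [c_min, c_max] with |c − c_*| > L·λ one has J_FWI(c) ≥ J_FWI(c_max); that is, c = c_max minimizes J_FWI over the part of [c_min, c_max] lying outside the interval [c_* − Lλ, c_* + Lλ]. (Theorem 1 of the paper.) -/
/-!
When the two travel times differ by at least the wavelet length `λ`, the predicted and observed
traces have disjoint supports, so the misfit is the sum of their energies,
`J c = ½ (1/(4 c_*²) + 1/(4 c²)) ‖w_λ‖²`, which decreases in `c`. The separation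
`|τ(c) − τ(c_*)| = |z_s − z_r| |c − c_*| / (c c_*) ≥ |z_s − z_r| |c − c_*| / c_max²` exceeds `λ`
as soon as `|c − c_*| > L λ`; the gap hypothesis puts `c_max` itself in that region.
-/

open MeasureTheory Set Function

section ShiftedPulses

variable {f : ℝ → ℝ} {lam : ℝ}

lemma support_const_mul_comp_div_subset {w : ℝ → ℝ} (hw : support w ⊆ Ioo 0 1) (hlam : 0 < lam)
    (k : ℝ) : support (fun s => k * w (s / lam)) ⊆ Ioo 0 lam := by
  intro s hs
  have h := hw (right_ne_zero_of_mul hs)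
  exact ⟨(div_pos_iff_of_pos_right hlam).mp h.1, (div_lt_one hlam).mp h.2⟩

lemma mem_Ioo_of_comp_sub_ne_zero (hf : support f ⊆ Ioo 0 lam) {τ t : ℝ} (h : f (t - τ) ≠ 0) :
    t ∈ Ioo τ (τ + lam) := by
  obtain ⟨h0, h1⟩ := hf h
  exact ⟨by linarith, by linarith⟩

lemma comp_sub_mul_comp_sub_eq_zero (hf : support f ⊆ Ioo 0 lam) {τ₁ τ₂ : ℝ}
    (hsep : lam ≤ |τ₁ - τ₂|) (t : ℝ) : f (t - τ₁) * f (t - τ₂) = 0 := by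
  by_contra h
  obtain ⟨h₁, h₁'⟩ := mem_Ioo_of_comp_sub_ne_zero hf (left_ne_zero_of_mul h)
  obtain ⟨h₂, h₂'⟩ := mem_Ioo_of_comp_sub_ne_zero hf (right_ne_zero_of_mul h)
  exact hsep.not_gt (abs_sub_lt_iff.mpr ⟨by linarith, by linarith⟩)

lemma intervalIntegral_sq_comp_sub (hf : support f ⊆ Ioo 0 lam) {τ T : ℝ} (hτ : 0 ≤ τ)
    (hτT : τ + lam ≤ T) : ∫ t in (0:ℝ)..T, f (t - τ) ^ 2 = ∫ t, f t ^ 2 := by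
  have hsupp : support (fun t => f (t - τ) ^ 2) ⊆ Ioc 0 T := by
    intro t ht
    obtain ⟨h0, h1⟩ := mem_Ioo_of_comp_sub_ne_zero hf (pow_ne_zero_iff two_ne_zero |>.mp ht)
    exact ⟨by linarith, by linarith⟩
  rw [intervalIntegral.integral_eq_integral_of_support_subset hsupp]
  exact integral_sub_right_eq_self (fun t => f t ^ 2) τ

lemma intervalIntegral_sq_sub_comp_sub (hfc : Continuous f) (hf : support f ⊆ Ioo 0 lam)
    {T τ₁ τ₂ : ℝ} (k₁ k₂ : ℝ) (hτ₁ : 0 ≤ τ₁) (hτ₁T : τ₁ + lam ≤ T) (hτ₂ : 0 ≤ τ₂)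
    (hτ₂T : τ₂ + lam ≤ T) (hsep : lam ≤ |τ₁ - τ₂|) :
    ∫ t in (0:ℝ)..T, (k₁ * f (t - τ₁) - k₂ * f (t - τ₂)) ^ 2
      = (k₁ ^ 2 + k₂ ^ 2) * ∫ t, f t ^ 2 := by
  have hsum : ∀ t, (k₁ * f (t - τ₁) - k₂ * f (t - τ₂)) ^ 2
      = k₁ ^ 2 * f (t - τ₁) ^ 2 + k₂ ^ 2 * f (t - τ₂) ^ 2 := fun t => by
    linear_combination (-2 * k₁ * k₂) * comp_sub_mul_comp_sub_eq_zero hf hsep t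
  simp_rw [hsum]
  rw [intervalIntegral.integral_add (Continuous.intervalIntegrable (by fun_prop) _ _)
      (Continuous.intervalIntegrable (by fun_prop) _ _),
    intervalIntegral.integral_const_mul, intervalIntegral.integral_const_mul,
    intervalIntegral_sq_comp_sub hf hτ₁ hτ₁T, intervalIntegral_sq_comp_sub hf hτ₂ hτ₂T, add_mul]

end ShiftedPulses

lemma le_abs_div_sub_div {a c₁ c₂ M lam : ℝ} (ha : 0 < a) (hc₁ : 0 < c₁) (hc₂ : 0 < c₂)
    (hc₁M : c₁ ≤ M) (hc₂M : c₂ ≤ M) (hsep : M ^ 2 / a * lam ≤ |c₁ - c₂|) :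
    lam ≤ |a / c₁ - a / c₂| := by
  have hdiff : a / c₁ - a / c₂ = a * (c₂ - c₁) / (c₁ * c₂) := by field_simp
  have hM : c₁ * c₂ ≤ M ^ 2 := by nlinarith
  rw [hdiff, abs_div, abs_mul, abs_of_pos ha, abs_of_pos (mul_pos hc₁ hc₂), abs_sub_comm,
    le_div_iff₀ (mul_pos hc₁ hc₂)]
  rw [div_mul_eq_mul_div, div_le_iff₀ ha] at hsep
  rcases le_or_gt lam 0 with hlam | hlam
  · nlinarith [mul_pos hc₁ hc₂, abs_nonneg (c₁ - c₂)]
  · nlinarith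

theorem fwi_spurious_minimizer_at_cmax_general
    (zs zr T cmin cmax cstar lam : ℝ) (w1 : ℝ → ℝ)
    (hzr : zs ≠ zr)
    (hcmin : 0 < cmin) (hcc : cmin ≤ cmax)
    (hw1c : Continuous w1) (hw1s : Function.support w1 ⊆ Ioo 0 1)
    (hcstar : cstar ∈ Icc cmin cmax)
    (hlam : 0 < lam) (hlam0 : lam < T - |zs - zr| / cmin)
    (hgap : cmax - cstar > (2 * cmax ^ 2 / |zs - zr|) * lam)
    (J : ℝ → ℝ)
    (hJ : ∀ c, J c = (1/2) * ∫ t in (0:ℝ)..T,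
        ((1/(2*cstar)) * ((1/Real.sqrt lam) * w1 ((t - |zs - zr| / cstar) / lam))
          - (1/(2*c)) * ((1/Real.sqrt lam) * w1 ((t - |zs - zr| / c) / lam))) ^ 2) :
    ∀ c ∈ Icc cmin cmax, |c - cstar| > (2 * cmax ^ 2 / |zs - zr|) * lam →
      J c ≥ J cmax := by
  set a := |zs - zr|
  have ha : 0 < a := abs_pos.mpr (sub_ne_zero.mpr hzr)
  set E := ∫ t, ((1/Real.sqrt lam) * w1 (t / lam)) ^ 2
  have hsupp := support_const_mul_comp_div_subset hw1s hlam (1/Real.sqrt lam)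
  have hτ : ∀ c ∈ Icc cmin cmax, 0 ≤ a / c ∧ a / c + lam ≤ T := fun c hc =>
    ⟨by have := hcmin.trans_le hc.1; positivity,
      by linarith [div_le_div_of_nonneg_left ha.le hcmin hc.1]⟩
  have hJ_eq : ∀ c ∈ Icc cmin cmax, (2 * cmax ^ 2 / a) * lam < |c - cstar| →
      J c = 1/2 * ((1/(2*cstar)) ^ 2 + (1/(2*c)) ^ 2) * E := fun c hc hgt => by
    have hsep : lam ≤ |a / cstar - a / c| :=
      le_abs_div_sub_div ha (hcmin.trans_le hcstar.1) (hcmin.trans_le hc.1) hcstar.2 hc.2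
        (by rw [abs_sub_comm]
            linarith [show 0 ≤ cmax ^ 2 / a * lam by positivity,
              show 2 * cmax ^ 2 / a * lam = 2 * (cmax ^ 2 / a * lam) by ring])
    rw [hJ c, intervalIntegral_sq_sub_comp_sub (by fun_prop) hsupp _ _ (hτ cstar hcstar).1
      (hτ cstar hcstar).2 (hτ c hc).1 (hτ c hc).2 hsep, mul_assoc]
  intro c hc hgt
  have hcmax : cmax ∈ Icc cmin cmax := ⟨hcc, le_rfl⟩
  rw [hJ_eq c hc hgt, hJ_eq cmax hcmax (by rwa [abs_of_nonneg (by linarith [hcstar.2])])]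
  have hE : 0 ≤ E := integral_nonneg fun t => sq_nonneg _
  have hcmax_pos := hcmin.trans_le hcc
  have hc_pos := hcmin.trans_le hc.1
  gcongr
  exact hc.2

/-- Theorem 1 of the paper: outside a wavelength-sized neighborhood of the target
velocity `cstar`, the FWI objective is minimized at `c = cmax`. -/
theorem fwi_spurious_minimizer_at_cmax
    (zs zr T cmin cmax cstar lam : ℝ) (w1 : ℝ → ℝ)
    (hzr : zs ≠ zr) (hT : 0 < T)
    (hcmin : 0 < cmin) (hcc : cmin ≤ cmax)
    (htransit : |zs - zr| / cmin < T)
    (hw1c : Continuous w1) (hw1s : Function.support w1 ⊆ Ioo 0 1)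
    (hcstar : cstar ∈ Icc cmin cmax)
    (hlam : 0 < lam) (hlam0 : lam < T - |zs - zr| / cmin)
    (hgap : cmax - cstar > (2 * cmax ^ 2 / |zs - zr|) * lam)
    (J : ℝ → ℝ)
    (hJ : ∀ c, J c = (1/2) * ∫ t in (0:ℝ)..T,
        ((1/(2*cstar)) * ((1/Real.sqrt lam) * w1 ((t - |zs - zr| / cstar) / lam))
          - (1/(2*c)) * ((1/Real.sqrt lam) * w1 ((t - |zs - zr| / c) / lam))) ^ 2) :
    ∀ c ∈ Icc cmin cmax, |c - cstar| > (2 * cmax ^ 2 / |zs - zr|) * lam →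
      J c ≥ J cmax :=
  fwi_spurious_minimizer_at_cmax_general zs zr T cmin cmax cstar lam w1 hzr hcmin hcc hw1c hw1s
    hcstar hlam hlam0 hgap J hJ
end

section
/- Let L = 2·c_max²/|z_s − z_r| and let 0 < λ < λ₀, and suppose β = 0. Then J_WRI^α is constant on the part of [c_min, c_max] outside [c_* − Lλ, c_* + Lλ]: for any c, c' ∈ [c_min, c_max] with |c − c_*| > L·λ and |c' − c_*| > L·λ, J_WRI^α(c) = J_WRI^α(c'). (Theorem 2, case β = 0.) -/
/-!
Write `r` for the data residual `d_λ - S_p[c] w_λ`. The shear `(z, t) ↦ (z, t - |z_r - z| / c)`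
preserves the `L²` norm of `g` and turns `S[c] g` into `1 / (2c)` times the depth integral of the
sheared field, so Cauchy–Schwarz in depth bounds the objective below by
`½ · α² / (α² + Z / (4c²)) · ‖r‖²`; the field `θ · r (t + |z_r - z| / c)` attains this bound for
the optimal `θ`. Outside the window the arrival times `|z_s - z_r| / c` and `|z_s - z_r| / c_*`
differ by more than the wavelet length `λ`, so the two wavelets in `r` do not overlap and
`‖r‖² = (1 / (4c²) + 1 / (4c_*²)) ‖w₁‖²`. When `β = 0`, i.e. `Z = 4α²c_*²`, the product is
`‖w₁‖² / (8c_*²)`, independent of `c`.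
-/

open MeasureTheory Set

open Function

theorem sq_integral_le_measureReal_mul_integral_sq {α : Type*} [MeasurableSpace α]
    {μ : Measure α} [IsFiniteMeasure μ] {f : α → ℝ} (hf2 : Integrable (fun x => f x ^ 2) μ) :
    (∫ x, f x ∂μ) ^ 2 ≤ μ.real univ * ∫ x, f x ^ 2 ∂μ := by
  have hrhs : 0 ≤ μ.real univ * ∫ x, f x ^ 2 ∂μ :=
    mul_nonneg measureReal_nonneg (integral_nonneg fun _ => sq_nonneg _)
  by_cases hf : Integrable f μ
  swap
  · simpa [integral_undef hf] using hrhs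
  rcases eq_zero_or_neZero μ with rfl | _
  · simp
  have hjensen := (Even.convexOn_pow even_two).map_average_le (continuousOn_pow 2) isClosed_univ
    (ae_of_all _ fun _ => mem_univ _) hf hf2
  have hA : 0 < μ.real univ := measureReal_univ_pos
  simp only [average_eq, smul_eq_mul, ← div_eq_inv_mul, div_pow] at hjensen
  rw [div_le_div_iff₀ (by positivity) hA, sq (μ.real univ), ← mul_assoc] at hjensen
  exact le_of_mul_le_mul_right (by linarith) hA

theorem div_add_mul_sq_le_sq_sub_add {a κ Z ρ φ ψ : ℝ} (ha : 0 ≤ a) (hκ : κ ≠ 0) (hZ : 0 < Z)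
    (hφ : φ ^ 2 ≤ Z * ψ) : a / (a + κ ^ 2 * Z) * ρ ^ 2 ≤ (ρ - κ * φ) ^ 2 + a * ψ := by
  have hψ : a * φ ^ 2 / Z ≤ a * ψ := by
    rw [div_le_iff₀ hZ]
    nlinarith
  suffices a / (a + κ ^ 2 * Z) * ρ ^ 2 ≤ (ρ - κ * φ) ^ 2 + a * φ ^ 2 / Z by linarith
  have key : ((ρ - κ * φ) ^ 2 + a * φ ^ 2 / Z) * (a + κ ^ 2 * Z) - a * ρ ^ 2
      = (κ * Z * ρ - (a + κ ^ 2 * Z) * φ) ^ 2 / Z := by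
    field_simp
    ring
  rw [div_mul_eq_mul_div, div_le_iff₀ (by positivity), ← sub_nonneg, key]
  positivity

theorem measurePreserving_shear {α G : Type*} [MeasurableSpace α] [MeasurableSpace G] [AddGroup G]
    [MeasurableAdd₂ G] (μ : Measure α) (ν : Measure G) [SFinite μ] [SFinite ν]
    [ν.IsAddRightInvariant] {s : α → G} (hs : Measurable s) :
    MeasurePreserving (fun p : α × G => (p.1, p.2 + s p.1)) (μ.prod ν) (μ.prod ν) :=
  (MeasurePreserving.id μ).skew_product (measurable_snd.add (hs.comp measurable_fst))
    (ae_of_all _ fun z => map_add_right_eq_self ν (s z))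

section Slices

variable {α β : Type*} [MeasurableSpace α] [MeasurableSpace β] {μ : Measure α}
  [IsFiniteMeasure μ] {ν : Measure β} [SFinite ν] {G : α × β → ℝ}

theorem ae_sq_integral_prod_le (hG : Integrable (fun p => G p ^ 2) (μ.prod ν)) :
    ∀ᵐ y ∂ν, (∫ x, G (x, y) ∂μ) ^ 2 ≤ μ.real univ * ∫ x, G (x, y) ^ 2 ∂μ :=
  hG.prod_left_ae.mono fun _ hy => sq_integral_le_measureReal_mul_integral_sq hy

theorem memLp_two_integral_prod_right (hG : MemLp G 2 (μ.prod ν)) :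
    MemLp (fun y => ∫ x, G (x, y) ∂μ) 2 ν := by
  have hmeas := hG.aestronglyMeasurable.prod_swap.integral_prod_right'
  refine (memLp_two_iff_integrable_sq hmeas).2 <|
    (hG.integrable_sq.integral_prod_right.const_mul (μ.real univ)).mono' (hmeas.pow 2) ?_
  filter_upwards [ae_sq_integral_prod_le hG.integrable_sq] with y hy
  simpa using hy

end Slices

/-- With `r = d_λ - S_p[c] w_λ`, `κ = 1 / (2c)` and `s z = |z_r - z| / c`, this is the objective
minimised in `J_WRI^α(c)`: `S[c] g` is `κ ∫ g(z, t - s z) dz`. -/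
noncomputable def extendedObjective (a b T κ α : ℝ) (s r : ℝ → ℝ) (g : ℝ → ℝ → ℝ) : ℝ :=
  1 / 2 * ((∫ t in (0:ℝ)..T, (r t - κ * ∫ z in a..b, g z (t - s z)) ^ 2)
    + α ^ 2 * ∫ z in a..b, ∫ t : ℝ, g z t ^ 2)

section ExtendedObjective

variable {a b T κ α : ℝ} {s r : ℝ → ℝ}

theorem le_extendedObjective (hab : a < b) (hT : 0 ≤ T) (hκ : κ ≠ 0) (hs : Measurable s)
    (hr : MemLp r 2) {g : ℝ → ℝ → ℝ}
    (hg : MemLp (fun p : ℝ × ℝ => g p.1 p.2) 2 ((volume.restrict (Icc a b)).prod volume)) :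
    1 / 2 * (α ^ 2 / (α ^ 2 + κ ^ 2 * (b - a)) * ∫ t in (0:ℝ)..T, r t ^ 2)
      ≤ extendedObjective a b T κ α s r g := by
  set μ := volume.restrict (Icc a b)
  have hshear : MeasurePreserving (fun p : ℝ × ℝ => (p.1, p.2 - s p.1))
      (μ.prod volume) (μ.prod volume) := by
    simpa only [sub_eq_add_neg] using measurePreserving_shear μ volume (s := fun z => -s z) hs.neg
  set G : ℝ × ℝ → ℝ := fun p => g p.1 (p.2 - s p.1)
  have hG : MemLp G 2 (μ.prod volume) := hg.comp_measurePreserving hshear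
  have hpenalty : ∫ z in a..b, ∫ t, g z t ^ 2 = ∫ t, ∫ z, G (z, t) ^ 2 ∂μ := by
    have hmap := integral_map hshear.measurable.aemeasurable (f := fun p => g p.1 p.2 ^ 2)
      (by rw [hshear.map_eq]; exact hg.integrable_sq.aestronglyMeasurable)
    rw [hshear.map_eq] at hmap
    rw [intervalIntegral.integral_of_le hab.le, ← integral_Icc_eq_integral_Ioc,
      ← integral_prod_symm _ hG.integrable_sq, ← integral_prod _ hg.integrable_sq, hmap]
  set φ : ℝ → ℝ := fun t => ∫ z, G (z, t) ∂μ
  have hφ : ∀ t, ∫ z in a..b, g z (t - s z) = φ t := fun t => by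
    rw [intervalIntegral.integral_of_le hab.le, ← integral_Icc_eq_integral_Ioc]
  set ψ : ℝ → ℝ := fun t => ∫ z, G (z, t) ^ 2 ∂μ
  have hψ : Integrable ψ := hG.integrable_sq.integral_prod_right
  have hCS : ∀ᵐ t, φ t ^ 2 ≤ (b - a) * ψ t := by
    simpa [μ, hab.le] using ae_sq_integral_prod_le hG.integrable_sq
  have hres : Integrable (fun t => (r t - κ * φ t) ^ 2) :=
    (hr.sub ((memLp_two_integral_prod_right hG).const_mul κ)).integrable_sq
  calc 1 / 2 * (α ^ 2 / (α ^ 2 + κ ^ 2 * (b - a)) * ∫ t in (0:ℝ)..T, r t ^ 2)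
      = 1 / 2 * ∫ t in Ioc 0 T, α ^ 2 / (α ^ 2 + κ ^ 2 * (b - a)) * r t ^ 2 := by
        rw [intervalIntegral.integral_of_le hT, integral_const_mul]
    _ ≤ 1 / 2 * ∫ t in Ioc 0 T, ((r t - κ * φ t) ^ 2 + α ^ 2 * ψ t) := by
        gcongr 1 / 2 * ?_
        refine integral_mono_ae (hr.integrable_sq.integrableOn.const_mul _)
          (hres.integrableOn.add (hψ.integrableOn.const_mul _)) ?_
        filter_upwards [ae_restrict_of_ae hCS] with t ht
        exact div_add_mul_sq_le_sq_sub_add (sq_nonneg α) hκ (sub_pos.2 hab) ht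
    _ ≤ 1 / 2 * ((∫ t in Ioc 0 T, (r t - κ * φ t) ^ 2) + α ^ 2 * ∫ t, ψ t) := by
        rw [integral_add hres.integrableOn (hψ.integrableOn.const_mul _), integral_const_mul]
        gcongr
        · exact ae_of_all _ fun t => integral_nonneg fun z => sq_nonneg _
        · exact Measure.restrict_le_self
    _ = extendedObjective a b T κ α s r g := by
        simp only [extendedObjective, hφ, hpenalty, intervalIntegral.integral_of_le hT]

theorem extendedObjective_shift (hr_supp : support r ⊆ Ioc 0 T) (θ : ℝ) :
    extendedObjective a b T κ α s r (fun z t => θ * r (t + s z))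
      = 1 / 2 * ((1 - κ * (b - a) * θ) ^ 2 + α ^ 2 * (b - a) * θ ^ 2) * ∫ t, r t ^ 2 := by
  have hpenalty : ∀ z, ∫ t, (θ * r (t + s z)) ^ 2 = θ ^ 2 * ∫ t, r t ^ 2 := fun z => by
    simp only [mul_pow, integral_const_mul, integral_add_right_eq_self (fun t => r t ^ 2)]
  have hwindow : ∫ t in (0:ℝ)..T, ((1 - κ * (b - a) * θ) * r t) ^ 2
      = (1 - κ * (b - a) * θ) ^ 2 * ∫ t, r t ^ 2 := by
    rw [intervalIntegral.integral_eq_integral_of_support_subset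
      ((support_pow _ two_ne_zero).trans_subset ((support_mul_subset_right _ _).trans hr_supp))]
    simp only [mul_pow, integral_const_mul]
  have hresidual : ∀ t, r t - κ * ((b - a) * (θ * r t)) = (1 - κ * (b - a) * θ) * r t :=
    fun t => by ring
  simp only [extendedObjective, sub_add_cancel, intervalIntegral.integral_const, smul_eq_mul,
    hpenalty, hresidual, hwindow]
  ring

theorem sInf_extendedObjective (hab : a < b) (hT : 0 ≤ T) (hκ : κ ≠ 0) (hs : Measurable s)
    (hr : MemLp r 2) (hr_supp : support r ⊆ Ioc 0 T) :
    sInf {v | ∃ g : ℝ → ℝ → ℝ,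
        MemLp (fun p : ℝ × ℝ => g p.1 p.2) 2 ((volume.restrict (Icc a b)).prod volume) ∧
        v = extendedObjective a b T κ α s r g}
      = 1 / 2 * (α ^ 2 / (α ^ 2 + κ ^ 2 * (b - a)) * ∫ t, r t ^ 2) := by
  have hwindow : ∫ t in (0:ℝ)..T, r t ^ 2 = ∫ t, r t ^ 2 :=
    intervalIntegral.integral_eq_integral_of_support_subset
      ((support_pow _ two_ne_zero).trans_subset hr_supp)
  have hD : 0 < α ^ 2 + κ ^ 2 * (b - a) := by have := sub_pos.2 hab; positivity
  -- the minimiser over `θ` of the value computed in `extendedObjective_shift`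
  set θ := κ / (α ^ 2 + κ ^ 2 * (b - a)) with hθ
  refine IsLeast.csInf_eq ⟨⟨fun z t => θ * r (t + s z), ?_, ?_⟩, ?_⟩
  · exact ((hr.comp_snd _).const_mul θ).comp_measurePreserving
      (measurePreserving_shear _ volume hs)
  · rw [extendedObjective_shift hr_supp, hθ]
    field_simp
    ring
  · rintro v ⟨g, hg, rfl⟩
    rw [← hwindow]
    exact le_extendedObjective hab hT hκ hs hr hg

end ExtendedObjective

noncomputable def delayedWavelet (w1 : ℝ → ℝ) (lam τ t : ℝ) : ℝ :=
  1 / Real.sqrt lam * w1 ((t - τ) / lam)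

section DelayedWavelet

variable {w1 : ℝ → ℝ} {lam : ℝ}

theorem support_delayedWavelet_subset (hw1s : support w1 ⊆ Ioo 0 1) (hlam : 0 < lam) (τ : ℝ) :
    support (delayedWavelet w1 lam τ) ⊆ Ioo τ (τ + lam) := by
  intro t ht
  obtain ⟨h0, h1⟩ :=
    hw1s (support_mul_subset_right (fun _ => _) (fun t => w1 ((t - τ) / lam)) ht)
  rw [div_pos_iff_of_pos_right hlam] at h0
  rw [div_lt_one hlam] at h1
  constructor <;> linarith

theorem support_delayedWavelet_subset_Ioc (hw1s : support w1 ⊆ Ioo 0 1) (hlam : 0 < lam)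
    {τ a b : ℝ} (ha : a ≤ τ) (hb : τ + lam ≤ b) :
    support (delayedWavelet w1 lam τ) ⊆ Ioc a b :=
  (support_delayedWavelet_subset hw1s hlam τ).trans
    (Ioo_subset_Ioc_self.trans (Ioc_subset_Ioc ha hb))

theorem continuous_delayedWavelet (hw1c : Continuous w1) (τ : ℝ) :
    Continuous (delayedWavelet w1 lam τ) := by
  unfold delayedWavelet
  fun_prop

theorem memLp_delayedWavelet (hw1c : Continuous w1) (hw1s : support w1 ⊆ Ioo 0 1)
    (hlam : 0 < lam) (τ : ℝ) : MemLp (delayedWavelet w1 lam τ) 2 :=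
  (continuous_delayedWavelet hw1c τ).memLp_of_hasCompactSupport <|
    HasCompactSupport.intro isCompact_Icc fun _ ht => notMem_support.1 fun h =>
      ht (Ioo_subset_Icc_self (support_delayedWavelet_subset hw1s hlam τ h))

theorem integral_delayedWavelet_sq (hlam : 0 < lam) (τ : ℝ) :
    ∫ t, delayedWavelet w1 lam τ t ^ 2 = ∫ t, w1 t ^ 2 := by
  have hscale : ∀ t, delayedWavelet w1 lam τ t ^ 2 = lam⁻¹ * w1 ((t - τ) / lam) ^ 2 := fun t => by
    rw [delayedWavelet, mul_pow, div_pow, Real.sq_sqrt hlam.le, one_pow, one_div]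
  simp only [hscale, integral_const_mul]
  rw [integral_sub_right_eq_self (fun t => w1 (t / lam) ^ 2),
    Measure.integral_comp_div (fun t => w1 t ^ 2), abs_of_pos hlam, smul_eq_mul,
    inv_mul_cancel_left₀ hlam.ne']

theorem delayedWavelet_mul_eq_zero (hw1s : support w1 ⊆ Ioo 0 1) (hlam : 0 < lam)
    {τ₁ τ₂ : ℝ} (hsep : lam ≤ |τ₁ - τ₂|) (t : ℝ) :
    delayedWavelet w1 lam τ₁ t * delayedWavelet w1 lam τ₂ t = 0 := by
  by_contra h
  obtain ⟨h₁, h₁'⟩ := support_delayedWavelet_subset hw1s hlam τ₁ (left_ne_zero_of_mul h)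
  obtain ⟨h₂, h₂'⟩ := support_delayedWavelet_subset hw1s hlam τ₂ (right_ne_zero_of_mul h)
  rcases abs_cases (τ₁ - τ₂) with ⟨habs, -⟩ | ⟨habs, -⟩ <;> rw [habs] at hsep <;> linarith

theorem integral_sq_sub_delayedWavelet (hw1c : Continuous w1) (hw1s : support w1 ⊆ Ioo 0 1)
    (hlam : 0 < lam) {τ₁ τ₂ : ℝ} (hsep : lam ≤ |τ₁ - τ₂|) (p q : ℝ) :
    ∫ t, (p * delayedWavelet w1 lam τ₁ t - q * delayedWavelet w1 lam τ₂ t) ^ 2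
      = (p ^ 2 + q ^ 2) * ∫ t, w1 t ^ 2 := by
  have hexpand : ∀ t, (p * delayedWavelet w1 lam τ₁ t - q * delayedWavelet w1 lam τ₂ t) ^ 2
      = p ^ 2 * delayedWavelet w1 lam τ₁ t ^ 2 + q ^ 2 * delayedWavelet w1 lam τ₂ t ^ 2 :=
    fun t => by linear_combination (-2 * p * q) * delayedWavelet_mul_eq_zero hw1s hlam hsep t
  have hint : ∀ τ, Integrable fun t => delayedWavelet w1 lam τ t ^ 2 :=
    fun τ => (memLp_delayedWavelet hw1c hw1s hlam τ).integrable_sq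
  simp only [hexpand]
  rw [integral_add ((hint _).const_mul _) ((hint _).const_mul _), integral_const_mul,
    integral_const_mul, integral_delayedWavelet_sq hlam, integral_delayedWavelet_sq hlam]
  ring

theorem sInf_extendedObjective_delayedWavelet {a b T κ α : ℝ} {s : ℝ → ℝ}
    (hw1c : Continuous w1) (hw1s : support w1 ⊆ Ioo 0 1) (hlam : 0 < lam) (hab : a < b)
    (hκ : κ ≠ 0) (hs : Measurable s) {τ₁ τ₂ : ℝ} (hτ₁ : 0 ≤ τ₁) (hτ₁T : τ₁ + lam ≤ T)
    (hτ₂ : 0 ≤ τ₂) (hτ₂T : τ₂ + lam ≤ T) (hsep : lam ≤ |τ₁ - τ₂|) (p q : ℝ) :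
    sInf {v | ∃ g : ℝ → ℝ → ℝ,
        MemLp (fun p : ℝ × ℝ => g p.1 p.2) 2 ((volume.restrict (Icc a b)).prod volume) ∧
        v = extendedObjective a b T κ α s
          (fun t => p * delayedWavelet w1 lam τ₁ t - q * delayedWavelet w1 lam τ₂ t) g}
      = 1 / 2 * (α ^ 2 / (α ^ 2 + κ ^ 2 * (b - a)) * ((p ^ 2 + q ^ 2) * ∫ t, w1 t ^ 2)) := by
  rw [sInf_extendedObjective (r := fun t => p * delayedWavelet w1 lam τ₁ t
      - q * delayedWavelet w1 lam τ₂ t) hab (by linarith) hκ hs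
    (((memLp_delayedWavelet hw1c hw1s hlam _).const_mul _).sub
      ((memLp_delayedWavelet hw1c hw1s hlam _).const_mul _))
    ((support_sub _ _).trans (union_subset
      ((support_mul_subset_right _ _).trans
        (support_delayedWavelet_subset_Ioc hw1s hlam hτ₁ hτ₁T))
      ((support_mul_subset_right _ _).trans
        (support_delayedWavelet_subset_Ioc hw1s hlam hτ₂ hτ₂T)))),
    integral_sq_sub_delayedWavelet hw1c hw1s hlam hsep]

end DelayedWavelet

theorem two_mul_lt_abs_div_sub_div {D c c' m lam : ℝ} (hD : 0 < D) (hc : 0 < c) (hc' : 0 < c')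
    (hcm : c ≤ m) (hc'm : c' ≤ m) (h : 2 * m ^ 2 / D * lam < |c - c'|) :
    2 * lam < |D / c - D / c'| := by
  rw [div_sub_div _ _ hc.ne' hc'.ne', show D * c' - c * D = D * (c' - c) by ring, abs_div,
    abs_mul, abs_of_pos hD, abs_of_pos (mul_pos hc hc'), abs_sub_comm, lt_div_iff₀ (mul_pos hc hc')]
  rw [div_mul_eq_mul_div, div_lt_iff₀ hD] at h
  have hcc' : c * c' ≤ m ^ 2 := by nlinarith
  rcases le_or_gt lam 0 with hlam | hlam <;>
    nlinarith [mul_nonneg hD.le (abs_nonneg (c - c')), mul_pos hc hc']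

theorem wri_constant_outside_window_general
    (zs zr zmin zmax T cmin cmax cstar lam α : ℝ) (w1 : ℝ → ℝ)
    (hzr : zs ≠ zr) (hz : zmin < zmax)
    (hcmin : 0 < cmin)
    (hw1c : Continuous w1) (hw1s : Function.support w1 ⊆ Ioo 0 1)
    (hcstar : cstar ∈ Icc cmin cmax)
    (hlam : 0 < lam) (hlam0 : lam < T - |zs - zr| / cmin)
    (hβ : (zmax - zmin) / cstar^2 - 4 * α^2 = 0)
    (JW : ℝ → ℝ)
    (hJW : ∀ c, JW c = sInf { v : ℝ | ∃ g : ℝ → ℝ → ℝ,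
        MemLp (fun p : ℝ × ℝ => g p.1 p.2) 2
          ((volume.restrict (Icc zmin zmax)).prod volume) ∧
        v = (1/2) * ((∫ t in (0:ℝ)..T,
              ((1/(2*cstar)) * ((1/Real.sqrt lam) * w1 ((t - |zs - zr| / cstar) / lam))
                - (1/(2*c)) * ((1/Real.sqrt lam) * w1 ((t - |zs - zr| / c) / lam))
                - (1/(2*c)) * ∫ z in zmin..zmax, g z (t - |zr - z| / c)) ^ 2)
            + α^2 * ∫ z in zmin..zmax, ∫ t : ℝ, (g z t) ^ 2) }) :
    ∀ c ∈ Icc cmin cmax, |c - cstar| > (2 * cmax ^ 2 / |zs - zr|) * lam →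
      ∀ c' ∈ Icc cmin cmax, |c' - cstar| > (2 * cmax ^ 2 / |zs - zr|) * lam →
        JW c = JW c' := by
  suffices key : ∀ c ∈ Icc cmin cmax, |c - cstar| > (2 * cmax ^ 2 / |zs - zr|) * lam →
      JW c = (∫ t, w1 t ^ 2) / (8 * cstar ^ 2) by
    intro c hc hcw c' hc' hcw'
    rw [key c hc hcw, key c' hc' hcw']
  rintro c ⟨hc1, hc2⟩ hcw
  obtain ⟨hcs1, hcs2⟩ := hcstar
  have hD : 0 < |zs - zr| := abs_pos.2 (sub_ne_zero.2 hzr)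
  have hc : 0 < c := hcmin.trans_le hc1
  have hcs : 0 < cstar := hcmin.trans_le hcs1
  have hwindow : ∀ c' ≥ cmin, 0 ≤ |zs - zr| / c' ∧ |zs - zr| / c' + lam ≤ T := fun c' hc' =>
    ⟨div_nonneg hD.le (hcmin.trans_le hc').le,
      by linarith [div_le_div_of_nonneg_left hD.le hcmin hc']⟩
  have hsep : lam ≤ |(|zs - zr| / cstar) - |zs - zr| / c| := by
    linarith [two_mul_lt_abs_div_sub_div hD hcs hc hcs2 hc2 (abs_sub_comm c cstar ▸ hcw)]
  have hZ : zmax - zmin = 4 * α ^ 2 * cstar ^ 2 := by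
    field_simp at hβ
    linarith
  have hα : α ≠ 0 := by
    rintro rfl
    linarith
  rw [hJW c]
  refine (sInf_extendedObjective_delayedWavelet (κ := 1 / (2 * c)) (α := α)
    (s := fun z => |zr - z| / c) hw1c hw1s hlam hz (by simp [hc.ne']) (by fun_prop)
    (hwindow cstar hcs1).1 (hwindow cstar hcs1).2 (hwindow c hc1).1 (hwindow c hc1).2 hsep
    _ _).trans ?_
  rw [hZ]
  field_simp
  ring

/-- Theorem 2 of the paper, case `β = 0`: the WRI objective is constant on the part of
`[cmin, cmax]` outside a wavelength-sized neighborhood of the target velocity. -/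
theorem wri_constant_outside_window
    (zs zr zmin zmax T cmin cmax cstar lam α : ℝ) (w1 : ℝ → ℝ)
    (hzr : zs ≠ zr) (hz : zmin < zmax) (hT : 0 < T)
    (hcmin : 0 < cmin) (hcc : cmin ≤ cmax)
    (htransit : |zs - zr| / cmin < T)
    (hw1c : Continuous w1) (hw1s : Function.support w1 ⊆ Ioo 0 1)
    (hcstar : cstar ∈ Icc cmin cmax)
    (hlam : 0 < lam) (hlam0 : lam < T - |zs - zr| / cmin)
    (hα : 0 < α)
    (hβ : (zmax - zmin) / cstar^2 - 4 * α^2 = 0)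
    (JW : ℝ → ℝ)
    (hJW : ∀ c, JW c = sInf { v : ℝ | ∃ g : ℝ → ℝ → ℝ,
        MemLp (fun p : ℝ × ℝ => g p.1 p.2) 2
          ((volume.restrict (Icc zmin zmax)).prod volume) ∧
        v = (1/2) * ((∫ t in (0:ℝ)..T,
              ((1/(2*cstar)) * ((1/Real.sqrt lam) * w1 ((t - |zs - zr| / cstar) / lam))
                - (1/(2*c)) * ((1/Real.sqrt lam) * w1 ((t - |zs - zr| / c) / lam))
                - (1/(2*c)) * ∫ z in zmin..zmax, g z (t - |zr - z| / c)) ^ 2)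
            + α^2 * ∫ z in zmin..zmax, ∫ t : ℝ, (g z t) ^ 2) }) :
    ∀ c ∈ Icc cmin cmax, |c - cstar| > (2 * cmax ^ 2 / |zs - zr|) * lam →
      ∀ c' ∈ Icc cmin cmax, |c' - cstar| > (2 * cmax ^ 2 / |zs - zr|) * lam →
        JW c = JW c' :=
  wri_constant_outside_window_general zs zr zmin zmax T cmin cmax cstar lam α w1 hzr hz hcmin hw1c
    hw1s hcstar hlam hlam0 hβ JW hJW
end

section
/- Let L = 2·c_max²/|z_s − z_r| and let 0 < λ < λ₀. Then for every c ∈ [c_min, c_max] with |c − c_*| > L·λ, the FWI objective takes the explicit value J_FWI(c) = (1/2)·(1/(4c²) + 1/(4c_*²))·‖w₁‖²_{L²(ℝ)}. (Equation 18 of the paper.) -/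
/-!
The wavelet delayed by the travel time `τ = |z_s - z_r| / c` and dilated by `λ` lives in the window
`(τ, τ + λ)`. Outside the window `|c - c_*| ≤ L λ` the travel times of `c` and `c_*` differ by more
than `λ`, so the two windows are disjoint: the cross term of the misfit vanishes, and each remaining
square integrates to `λ ‖w₁‖²` because its window lies inside `[0, T]`.
-/

open MeasureTheory Set

section ShiftedDilated

variable {lam τ : ℝ}

lemma support_comp_sub_div_subset {M : Type*} [Zero M] {w : ℝ → M}
    (hw : Function.support w ⊆ Ioo 0 1) (hlam : 0 < lam) :
    Function.support (fun t => w ((t - τ) / lam)) ⊆ Ioo τ (τ + lam) := by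
  intro t ht
  have hmem := hw ht
  rw [mem_Ioo, lt_div_iff₀ hlam, div_lt_one hlam] at hmem
  constructor <;> linarith [hmem.1, hmem.2]

lemma comp_sub_div_mul_comp_sub_div_eq_zero {M : Type*} [MulZeroClass M] {w v : ℝ → M}
    {τ₁ τ₂ : ℝ} (hw : Function.support w ⊆ Ioo 0 1) (hv : Function.support v ⊆ Ioo 0 1)
    (hlam : 0 < lam) (hsep : lam ≤ |τ₁ - τ₂|) (t : ℝ) :
    w ((t - τ₁) / lam) * v ((t - τ₂) / lam) = 0 := by
  by_contra h
  have h₁ := support_comp_sub_div_subset hw hlam (left_ne_zero_of_mul h)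
  have h₂ := support_comp_sub_div_subset hv hlam (right_ne_zero_of_mul h)
  have : |τ₁ - τ₂| < lam := abs_sub_lt_iff.2 ⟨by linarith [h₁.1, h₂.2], by linarith [h₁.2, h₂.1]⟩
  linarith

lemma intervalIntegral_comp_sub_div {E : Type*} [NormedAddCommGroup E] [NormedSpace ℝ E]
    {f : ℝ → E} {a b : ℝ} (hf : Function.support f ⊆ Ioo 0 1) (hlam : 0 < lam)
    (ha : a ≤ τ) (hb : τ + lam ≤ b) :
    ∫ t in a..b, f ((t - τ) / lam) = lam • ∫ t, f t := by
  rw [intervalIntegral.integral_of_le (by linarith),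
    setIntegral_eq_integral_of_forall_compl_eq_zero fun t ht => ?_]
  · rw [integral_sub_right_eq_self (fun s => f (s / lam)) τ, Measure.integral_comp_div,
      abs_of_pos hlam]
  · by_contra hne
    have hmem := support_comp_sub_div_subset hf hlam (τ := τ) hne
    exact ht ⟨by linarith [hmem.1], by linarith [hmem.2]⟩

end ShiftedDilated

lemma lt_abs_div_sub_div {D c c' cmax lam : ℝ} (hD : 0 < D) (hc : 0 < c) (hc' : 0 < c')
    (hcmax : c ≤ cmax) (hc'max : c' ≤ cmax) (h : cmax ^ 2 / D * lam < |c - c'|) :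
    lam < |D / c - D / c'| := by
  rcases lt_or_ge lam 0 with hlam | hlam
  · exact hlam.trans_le (abs_nonneg _)
  have hcc' : 0 < c * c' := mul_pos hc hc'
  have hdiff : D / c - D / c' = D * (c' - c) / (c * c') := by field_simp
  rw [hdiff, abs_div, abs_mul, abs_of_pos hD, abs_of_pos hcc', abs_sub_comm, lt_div_iff₀ hcc']
  rw [div_mul_eq_mul_div, div_lt_iff₀' hD] at h
  have : c * c' ≤ cmax ^ 2 := by nlinarith
  nlinarith

lemma intervalIntegral_sq_sub_of_mul_eq_zero {μ : Measure ℝ} {f g : ℝ → ℝ} {a b α β : ℝ}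
    (hf : IntervalIntegrable (fun t => f t ^ 2) μ a b)
    (hg : IntervalIntegrable (fun t => g t ^ 2) μ a b) (hfg : ∀ t, f t * g t = 0) :
    ∫ t in a..b, (α * f t - β * g t) ^ 2 ∂μ
      = α ^ 2 * ∫ t in a..b, f t ^ 2 ∂μ + β ^ 2 * ∫ t in a..b, g t ^ 2 ∂μ := by
  rw [← intervalIntegral.integral_const_mul, ← intervalIntegral.integral_const_mul,
    ← intervalIntegral.integral_add (hf.const_mul _) (hg.const_mul _)]
  exact intervalIntegral.integral_congr fun t _ => by linear_combination (-2 * α * β) * hfg t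

theorem fwi_explicit_value_outside_window_general
    (zs zr T cmin cmax cstar lam : ℝ) (w1 : ℝ → ℝ)
    (hzr : zs ≠ zr)
    (hcmin : 0 < cmin)
    (hw1c : Continuous w1) (hw1s : Function.support w1 ⊆ Ioo 0 1)
    (hcstar : cstar ∈ Icc cmin cmax)
    (hlam : 0 < lam) (hlam0 : lam < T - |zs - zr| / cmin)
    (J : ℝ → ℝ)
    (hJ : ∀ c, J c = (1/2) * ∫ t in (0:ℝ)..T,
        ((1/(2*cstar)) * ((1/Real.sqrt lam) * w1 ((t - |zs - zr| / cstar) / lam))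
          - (1/(2*c)) * ((1/Real.sqrt lam) * w1 ((t - |zs - zr| / c) / lam))) ^ 2) :
    ∀ c ∈ Icc cmin cmax, |c - cstar| > (2 * cmax ^ 2 / |zs - zr|) * lam →
      J c = (1/2) * (1/(4*c^2) + 1/(4*cstar^2)) * ∫ t : ℝ, (w1 t) ^ 2 := by
  intro c hc hdist
  set D := |zs - zr|
  have hD : 0 < D := abs_pos.2 (sub_ne_zero.2 hzr)
  have hc0 : 0 < c := hcmin.trans_le hc.1
  have hcstar0 : 0 < cstar := hcmin.trans_le hcstar.1
  have hsep : lam < |D / cstar - D / c| := by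
    refine lt_abs_div_sub_div hD hcstar0 hc0 hcstar.2 hc.2 ?_
    rw [abs_sub_comm]
    have : 0 ≤ cmax ^ 2 / D * lam := by positivity
    linarith [show 2 * cmax ^ 2 / D * lam = 2 * (cmax ^ 2 / D * lam) by ring]
  have hw1sq : Function.support (fun t => w1 t ^ 2) ⊆ Ioo 0 1 :=
    (Function.support_pow w1 two_ne_zero).subset.trans hw1s
  have hwindow (b : ℝ) (hb : b ∈ Icc cmin cmax) :
      ∫ t in (0:ℝ)..T, w1 ((t - D / b) / lam) ^ 2 = lam * ∫ t, w1 t ^ 2 := by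
    refine intervalIntegral_comp_sub_div hw1sq hlam (div_pos hD (hcmin.trans_le hb.1)).le ?_
    linarith [div_le_div_of_nonneg_left hD.le hcmin hb.1]
  have hint (b : ℝ) : IntervalIntegrable (fun t => w1 ((t - D / b) / lam) ^ 2) volume 0 T :=
    ((hw1c.comp (by fun_prop)).pow 2).intervalIntegrable _ _
  have hsqrt : (1 / Real.sqrt lam) ^ 2 = 1 / lam := by
    rw [div_pow, one_pow, Real.sq_sqrt hlam.le]
  rw [hJ]
  simp only [← mul_assoc]
  rw [intervalIntegral_sq_sub_of_mul_eq_zero (hint cstar) (hint c)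
      (comp_sub_div_mul_comp_sub_div_eq_zero hw1s hw1s hlam hsep.le),
    hwindow cstar hcstar, hwindow c hc, mul_pow, mul_pow, hsqrt]
  field_simp
  ring

/-- Equation 18 of the paper: explicit value of the FWI objective outside a
wavelength-sized neighborhood of the target velocity. -/
theorem fwi_explicit_value_outside_window
    (zs zr T cmin cmax cstar lam : ℝ) (w1 : ℝ → ℝ)
    (hzr : zs ≠ zr) (hT : 0 < T)
    (hcmin : 0 < cmin) (hcc : cmin ≤ cmax)
    (htransit : |zs - zr| / cmin < T)
    (hw1c : Continuous w1) (hw1s : Function.support w1 ⊆ Ioo 0 1)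
    (hcstar : cstar ∈ Icc cmin cmax)
    (hlam : 0 < lam) (hlam0 : lam < T - |zs - zr| / cmin)
    (J : ℝ → ℝ)
    (hJ : ∀ c, J c = (1/2) * ∫ t in (0:ℝ)..T,
        ((1/(2*cstar)) * ((1/Real.sqrt lam) * w1 ((t - |zs - zr| / cstar) / lam))
          - (1/(2*c)) * ((1/Real.sqrt lam) * w1 ((t - |zs - zr| / c) / lam))) ^ 2) :
    ∀ c ∈ Icc cmin cmax, |c - cstar| > (2 * cmax ^ 2 / |zs - zr|) * lam →
      J c = (1/2) * (1/(4*c^2) + 1/(4*cstar^2)) * ∫ t : ℝ, (w1 t) ^ 2 :=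
  fwi_explicit_value_outside_window_general zs zr T cmin cmax cstar lam w1 hzr hcmin hw1c hw1s
    hcstar hlam hlam0 J hJ
end

section
/- For each c > 0, the bounded linear operator S[c] : L²([z_min,z_max]×ℝ) → L²([0,T]) defined by (S[c]f)(t) = (1/(2c))·∫_{z_min}^{z_max} f(z, t − |z_r − z|/c) dz is surjective: for every d ∈ L²([0,T]) there exists f ∈ L²([z_min,z_max]×ℝ) with S[c]f = d. (An explicit preimage is f(z,t) = (2c/(z_max − z_min))·d̃(t + |z_r − z|/c), where d̃ is the extension of d by zero to ℝ.) -/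
open MeasureTheory Set

/-! Take `f(z, t) = k · d̃(t + |z_r - z|/c)` with `k = 2c/(z_max - z_min)` and `d̃` the extension of `d`
by zero. Along the travel-time curve `t ↦ t - |z_r - z|/c` the shifts cancel, so the integrand of
`S[c] f` at `t ∈ [0,T]` is the constant `k · d t`. Square-integrability holds because the shear
`(z, t) ↦ (z, t + |z_r - z|/c)` preserves `μ ⊗ volume` for every measure `μ` on the `z`-line, and
the strip has finite width. -/

section Shear

variable {α G : Type*} [MeasurableSpace α] [MeasurableSpace G] [AddGroup G] [MeasurableAdd₂ G]
  (μ : Measure α) (ν : Measure G) [SFinite ν] [ν.IsAddRightInvariant] {g : α → G}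

theorem measurePreserving_prod_add_right_comp [SFinite μ] (hg : Measurable g) :
    MeasurePreserving (fun p : α × G => (p.1, p.2 + g p.1)) (μ.prod ν) (μ.prod ν) :=
  (MeasurePreserving.id μ).skew_product (measurable_snd.add (hg.comp measurable_fst))
    (ae_of_all _ fun a => map_add_right_eq_self ν (g a))

theorem MeasureTheory.MemLp.comp_snd_add_right [IsFiniteMeasure μ] {E : Type*}
    [NormedAddCommGroup E] {p : ENNReal} {D : G → E} (hD : MemLp D p ν) (hg : Measurable g) :
    MemLp (fun q : α × G => D (q.2 + g q.1)) p (μ.prod ν) := by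
  have hsnd : MeasurePreserving Prod.snd (μ.prod ν) (μ univ • ν) :=
    ⟨measurable_snd, Measure.map_snd_prod⟩
  exact (hD.smul_measure (measure_ne_top μ univ)).comp_measurePreserving
    (hsnd.comp (measurePreserving_prod_add_right_comp μ ν hg))

end Shear

theorem extended_modeling_operator_surjective_general
    (zmin zmax zr T c : ℝ) (hz : zmin < zmax) (hc : 0 < c)
    (d : ℝ → ℝ) (hd : MemLp d 2 (volume.restrict (Icc 0 T))) :
    ∃ f : ℝ → ℝ → ℝ,
      MemLp (fun p : ℝ × ℝ => f p.1 p.2) 2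
        ((volume.restrict (Icc zmin zmax)).prod volume) ∧
      ∀ t ∈ Icc (0:ℝ) T,
        (1/(2*c)) * ∫ z in zmin..zmax, f z (t - |zr - z| / c) = d t := by
  set k : ℝ := 2 * c / (zmax - zmin)
  set D : ℝ → ℝ := (Icc 0 T).indicator d
  have hD : MemLp D 2 volume := (memLp_indicator_iff_restrict measurableSet_Icc).2 hd
  refine ⟨fun z t => k * D (t + |zr - z| / c), ?_, fun t ht => ?_⟩
  · exact (hD.comp_snd_add_right _ _
      ((measurable_const.sub measurable_id).abs.div_const c)).const_mul k
  · have hconst : ∀ z, k * D (t - |zr - z| / c + |zr - z| / c) = k * d t := fun z => by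
      simp only [sub_add_cancel, D, indicator_of_mem ht]
    simp only [hconst, intervalIntegral.integral_const, smul_eq_mul, k]
    field_simp [sub_ne_zero.2 hz.ne', hc.ne']

/-- The extended modeling operator `S[c]` is surjective onto `L²([0,T])`: every
`d ∈ L²([0,T])` has a square-integrable preimage on the strip `[zmin,zmax]×ℝ`. -/
theorem extended_modeling_operator_surjective
    (zmin zmax zr T c : ℝ) (hz : zmin < zmax) (hT : 0 < T) (hc : 0 < c)
    (d : ℝ → ℝ) (hd : MemLp d 2 (volume.restrict (Icc 0 T))) :
    ∃ f : ℝ → ℝ → ℝ,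
      MemLp (fun p : ℝ × ℝ => f p.1 p.2) 2
        ((volume.restrict (Icc zmin zmax)).prod volume) ∧
      ∀ t ∈ Icc (0:ℝ) T,
        (1/(2*c)) * ∫ z in zmin..zmax, f z (t - |zr - z| / c) = d t :=
  extended_modeling_operator_surjective_general zmin zmax zr T c hz hc d hd
end

section
/- For each c > 0, the adjoint of the bounded operator S[c] is given by the explicit formula (S[c]*e)(z,t) = (1/(2c))·ẽ(t + |z_r − z|/c) for (z,t) ∈ [z_min,z_max]×ℝ, where ẽ denotes the extension of e ∈ L²([0,T]) by zero to ℝ. Equivalently, for all f ∈ L²([z_min,z_max]×ℝ) and e ∈ L²([0,T]): ∫_0^T (S[c]f)(t)·e(t) dt = ∫_{z_min}^{z_max} ∫_ℝ f(z,t)·(1/(2c))·ẽ(t + |z_r − z|/c) dt dz. (Equation 25 of the paper.) -/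
open MeasureTheory Set

/-!
Write `s z = |zr - z| / c`. The shear `(z, t) ↦ (z, t - s z)` preserves Lebesgue measure on the
strip, so `(z, t) ↦ f z (t - s z)` is again square integrable, and its product with `e t` is
integrable on the finite-measure strip by Cauchy–Schwarz. The adjoint formula is then Fubini
followed by the translation `t ↦ t + s z` in each inner time integral.
-/

section Shear

variable {α G : Type*} [MeasurableSpace α] [MeasurableSpace G] [AddGroup G] [MeasurableAdd G]
  {μ : Measure α} {ν : Measure G} [ν.IsAddRightInvariant]

theorem measurePreserving_prod_sub_shear [MeasurableSub₂ G] [SFinite μ] [SFinite ν]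
    {s : α → G} (hs : Measurable s) :
    MeasurePreserving (fun p : α × G => (p.1, p.2 - s p.1)) (μ.prod ν) (μ.prod ν) :=
  (MeasurePreserving.id μ).skew_product (by fun_prop)
    (ae_of_all _ fun z => (measurePreserving_sub_right ν (s z)).map_eq)

theorem integral_mul_indicator_add_eq_setIntegral (g e : G → ℝ) {S : Set G}
    (hS : MeasurableSet S) (a : G) :
    ∫ t, g t * S.indicator e (t + a) ∂ν = ∫ t in S, g (t - a) * e t ∂ν := by
  have htranslate := integral_add_right_eq_self (μ := ν) (fun t => g (t - a) * S.indicator e t) a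
  simp only [add_sub_cancel_right] at htranslate
  rw [htranslate, ← integral_indicator hS]
  congr 1 with t
  by_cases ht : t ∈ S <;> simp [ht]

theorem integrable_shear_mul_comp_snd [MeasurableSub₂ G] [IsFiniteMeasure μ] [SFinite ν]
    {F : α → G → ℝ} {e : G → ℝ} {s : α → G} {S : Set G} (hs : Measurable s)
    (hF : MemLp (fun p : α × G => F p.1 p.2) 2 (μ.prod ν)) (he : MemLp e 2 (ν.restrict S)) :
    Integrable (fun p : α × G => F p.1 (p.2 - s p.1) * e p.2) (μ.prod (ν.restrict S)) := by
  have hF_shear : MemLp (fun p : α × G => F p.1 (p.2 - s p.1)) 2 (μ.prod (ν.restrict S)) := by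
    rw [← Measure.restrict_univ (μ := μ), Measure.prod_restrict]
    exact (hF.comp_measurePreserving (measurePreserving_prod_sub_shear hs)).restrict _
  exact hF_shear.integrable_mul (he.comp_snd μ)

theorem setIntegral_integral_shear_mul_eq [MeasurableSub₂ G] [IsFiniteMeasure μ] [SFinite ν]
    {F : α → G → ℝ} {e : G → ℝ} {s : α → G} {S : Set G} (hs : Measurable s)
    (hF : MemLp (fun p : α × G => F p.1 p.2) 2 (μ.prod ν)) (hS : MeasurableSet S)
    (he : MemLp e 2 (ν.restrict S)) :
    ∫ t in S, (∫ z, F z (t - s z) ∂μ) * e t ∂ν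
      = ∫ z, ∫ t, F z t * S.indicator e (t + s z) ∂ν ∂μ := by
  simp_rw [integral_mul_indicator_add_eq_setIntegral _ _ hS, ← integral_mul_const]
  exact (integral_integral_swap (integrable_shear_mul_comp_snd hs hF he)).symm

end Shear

theorem extended_modeling_operator_adjoint_general
    (zmin zmax zr T c : ℝ) (hz : zmin < zmax) (hT : 0 < T)
    (f : ℝ → ℝ → ℝ) (e : ℝ → ℝ)
    (hf : MemLp (fun p : ℝ × ℝ => f p.1 p.2) 2
      ((volume.restrict (Icc zmin zmax)).prod volume))
    (he : MemLp e 2 (volume.restrict (Icc 0 T))) :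
    (∫ t in (0:ℝ)..T,
        ((1/(2*c)) * ∫ z in zmin..zmax, f z (t - |zr - z| / c)) * e t)
      = ∫ z in zmin..zmax, ∫ t : ℝ,
          f z t * ((1/(2*c)) * (Icc (0:ℝ) T).indicator e (t + |zr - z| / c)) := by
  have hs : Measurable fun z : ℝ => |zr - z| / c := by fun_prop
  simp_rw [intervalIntegral.integral_of_le hz.le, intervalIntegral.integral_of_le hT.le,
    ← integral_Icc_eq_integral_Ioc, mul_assoc, mul_left_comm (f _ _), integral_const_mul,
    setIntegral_integral_shear_mul_eq hs hf measurableSet_Icc he]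

/-- Equation 25 of the paper: the adjoint of `S[c]` is
`(S[c]* e)(z,t) = (1/(2c))·ẽ(t + |zr - z|/c)` on the strip, where `ẽ` is the
extension of `e` by zero; equivalently the stated integral identity holds. -/
theorem extended_modeling_operator_adjoint
    (zmin zmax zr T c : ℝ) (hz : zmin < zmax) (hT : 0 < T) (hc : 0 < c)
    (f : ℝ → ℝ → ℝ) (e : ℝ → ℝ)
    (hf : MemLp (fun p : ℝ × ℝ => f p.1 p.2) 2
      ((volume.restrict (Icc zmin zmax)).prod volume))
    (he : MemLp e 2 (volume.restrict (Icc 0 T))) :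
    (∫ t in (0:ℝ)..T,
        ((1/(2*c)) * ∫ z in zmin..zmax, f z (t - |zr - z| / c)) * e t)
      = ∫ z in zmin..zmax, ∫ t : ℝ,
          f z t * ((1/(2*c)) * (Icc (0:ℝ) T).indicator e (t + |zr - z| / c)) :=
  extended_modeling_operator_adjoint_general zmin zmax zr T c hz hT f e hf he
end

section
/- Let H and K be real Hilbert spaces, S : H → K a bounded linear operator with adjoint S*, α > 0, and r ∈ K. Then S∘S* + α²·I is a boundedly invertible positive operator on K, and the infimum over g ∈ H of (1/2)·(‖r − S g‖²_K + α²·‖g‖²_H) equals (α²/2)·⟨(S∘S* + α²·I)⁻¹ r, r⟩_K. (Equation 22 of the paper: the reduced WRI objective is a weighted norm of the residual.) -/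
open ContinuousLinearMap Set
open scoped InnerProductSpace

/-! Write `T = S S* + c` with `c > 0`. Since `⟪T e, e⟫ = ‖S* e‖² + c ‖e‖²`, `T` is
coercive and hence invertible by Lax–Milgram. For `w = T⁻¹ r` the point `g₀ = S* w` has
residual `r - S g₀ = c w`, and completing the square around `g₀` gives
`‖r - S g‖² + c ‖g‖² = c ⟪w, r⟫ + ‖S (g - g₀)‖² + c ‖g - g₀‖²`,
so the Tikhonov functional attains its infimum `c ⟪T⁻¹ r, r⟫` at `g₀`. -/

theorem ContinuousLinearMap.isUnit_of_coercive {V : Type*} [NormedAddCommGroup V]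
    [InnerProductSpace ℝ V] [CompleteSpace V] {T : V →L[ℝ] V} {c : ℝ} (hc : 0 < c)
    (hT : ∀ v, c * ‖v‖ ^ 2 ≤ ⟪T v, v⟫_ℝ) : IsUnit T := by
  have hB : IsCoercive ((innerSL ℝ) ∘L T) :=
    ⟨c, hc, fun v => by rw [mul_assoc, ← sq]; exact hT v⟩
  have hBT : (hB.continuousLinearEquivOfBilin : V →L[ℝ] V) = T :=
    ext fun v => (hB.unique_continuousLinearEquivOfBilin fun _ => rfl).symm
  exact hBT ▸ hB.continuousLinearEquivOfBilin.toUnit.isUnit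

section Tikhonov

variable {H K : Type*} [NormedAddCommGroup H] [InnerProductSpace ℝ H] [CompleteSpace H]
  [NormedAddCommGroup K] [InnerProductSpace ℝ K] [CompleteSpace K] (S : H →L[ℝ] K)

theorem inner_comp_adjoint_add_smul_one_apply_self (c : ℝ) (e : K) :
    ⟪(S ∘L adjoint S + c • (1 : K →L[ℝ] K)) e, e⟫_ℝ
      = ‖adjoint S e‖ ^ 2 + c * ‖e‖ ^ 2 := by
  rw [add_apply, comp_apply, smul_apply, one_apply_eq_self, inner_add_left, real_inner_smul_left,
    ← adjoint_inner_right, real_inner_self_eq_norm_sq, real_inner_self_eq_norm_sq]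

theorem isUnit_comp_adjoint_add_smul_one {c : ℝ} (hc : 0 < c) :
    IsUnit (S ∘L adjoint S + c • (1 : K →L[ℝ] K)) :=
  isUnit_of_coercive hc fun e => by
    rw [inner_comp_adjoint_add_smul_one_apply_self]
    exact le_add_of_nonneg_left (sq_nonneg _)

variable {c : ℝ} {r w : K}

theorem sub_apply_adjoint_eq_smul (hw : (S ∘L adjoint S + c • (1 : K →L[ℝ] K)) w = r) :
    r - S (adjoint S w) = c • w := by
  rw [← hw, add_apply, comp_apply, smul_apply, one_apply_eq_self, add_sub_cancel_left]

theorem norm_sub_sq_add_smul_norm_sq_eq (hw : (S ∘L adjoint S + c • (1 : K →L[ℝ] K)) w = r)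
    (g : H) :
    ‖r - S g‖ ^ 2 + c * ‖g‖ ^ 2
      = c * ⟪w, r⟫_ℝ + (‖S (g - adjoint S w)‖ ^ 2 + c * ‖g - adjoint S w‖ ^ 2) := by
  obtain ⟨d, rfl⟩ : ∃ d, g = adjoint S w + d := ⟨g - adjoint S w, by abel⟩
  have hres : r - S (adjoint S w + d) = c • w - S d := by
    rw [← sub_apply_adjoint_eq_smul S hw, map_add]; abel
  have hcross : ⟪w, S d⟫_ℝ = ⟪adjoint S w, d⟫_ℝ := (adjoint_inner_left S d w).symm
  have hval : ⟪w, r⟫_ℝ = ‖adjoint S w‖ ^ 2 + c * ‖w‖ ^ 2 := by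
    rw [← hw, real_inner_comm, inner_comp_adjoint_add_smul_one_apply_self]
  rw [hres, add_sub_cancel_left, norm_sub_sq_real, norm_add_sq_real, real_inner_smul_left,
    norm_smul, hcross, hval, Real.norm_eq_abs, mul_pow, sq_abs]
  ring

theorem isLeast_norm_sub_sq_add_smul_norm_sq (hc : 0 ≤ c)
    (hw : (S ∘L adjoint S + c • (1 : K →L[ℝ] K)) w = r) :
    IsLeast (range fun g => ‖r - S g‖ ^ 2 + c * ‖g‖ ^ 2) (c * ⟪w, r⟫_ℝ) := by
  refine ⟨⟨adjoint S w, ?_⟩, ?_⟩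
  · simp [norm_sub_sq_add_smul_norm_sq_eq S hw]
  · rintro _ ⟨g, rfl⟩
    simp only [norm_sub_sq_add_smul_norm_sq_eq S hw]
    exact le_add_of_nonneg_right (by positivity)

end Tikhonov

/-- Equation 22 of the paper: `S S* + α² I` is boundedly invertible and positive,
and the reduced WRI objective equals the weighted residual norm
`(α²/2)·⟨(S S* + α² I)⁻¹ r, r⟩`. -/
theorem wri_weighted_norm_identity
    {H K : Type*} [NormedAddCommGroup H] [InnerProductSpace ℝ H] [CompleteSpace H]
    [NormedAddCommGroup K] [InnerProductSpace ℝ K] [CompleteSpace K]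
    (S : H →L[ℝ] K) (α : ℝ) (hα : 0 < α) (r : K) :
    ∃ B : K →L[ℝ] K,
      (S ∘L (ContinuousLinearMap.adjoint S) + α^2 • (1 : K →L[ℝ] K)) ∘L B = 1 ∧
      B ∘L (S ∘L (ContinuousLinearMap.adjoint S) + α^2 • (1 : K →L[ℝ] K)) = 1 ∧
      (∀ e : K, e ≠ 0 →
        0 < (inner ℝ ((S ∘L (ContinuousLinearMap.adjoint S) + α^2 • (1 : K →L[ℝ] K)) e) e : ℝ)) ∧
      (⨅ g : H, (1/2) * (‖r - S g‖^2 + α^2 * ‖g‖^2))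
        = (α^2/2) * (inner ℝ (B r) r : ℝ) := by
  have hα2 : 0 < α ^ 2 := by positivity
  obtain ⟨T, hT⟩ := isUnit_comp_adjoint_add_smul_one S hα2
  refine ⟨T.inv, hT ▸ T.val_inv, hT ▸ T.inv_val, fun e he => ?_, ?_⟩
  · rw [inner_comp_adjoint_add_smul_one_apply_self]
    have : 0 < ‖e‖ := norm_pos_iff.mpr he
    positivity
  · have hw : (S ∘L adjoint S + α ^ 2 • (1 : K →L[ℝ] K)) (T.inv r) = r := by
      rw [← hT, ← mul_apply_eq_comp, T.val_inv, one_apply_eq_self]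
    rw [← Real.mul_iInf_of_nonneg (by norm_num),
      (isLeast_norm_sub_sq_add_smul_norm_sq S hα2.le hw).isGLB.ciInf_eq]
    ring
end

section
/- Let H and K be real Hilbert spaces, S : H → K a surjective bounded linear operator with adjoint S*, α > 0, and r ∈ K. Then the infimum over g ∈ H of (1/2)·(‖r − S g‖²_K + α²·‖g‖²_H) equals the infimum over e ∈ K of (1/2)·(‖r − S S* e‖²_K + α²·‖S* e‖²_H). (Equation 20 of the paper, via the orthogonal decomposition of H into the range of S* and the kernel of S.) -/
open ContinuousLinearMap

/-! Projecting a source `g` orthogonally onto `(ker S)ᗮ`, the closure of `range S*`, leaves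
`S g` unchanged and does not increase `‖g‖`, so the Tikhonov objective only decreases. By
continuity of the objective, its infimum over `range S*` is also a lower bound on its closure. -/

theorem ContinuousLinearMap.apply_starProjection_orthogonal_ker {𝕜 E F : Type*} [RCLike 𝕜]
    [NormedAddCommGroup E] [InnerProductSpace 𝕜 E] [CompleteSpace E]
    [NormedAddCommGroup F] [InnerProductSpace 𝕜 F] (T : E →L[𝕜] F) (v : E) :
    T (T.kerᗮ.starProjection v) = T v := by
  have hker : v - T.kerᗮ.starProjection v ∈ T.ker := by
    have := T.kerᗮ.sub_starProjection_mem_orthogonal v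
    rwa [Submodule.orthogonal_orthogonal] at this
  rw [LinearMap.mem_ker, map_sub, sub_eq_zero] at hker
  exact hker.symm

theorem ciInf_le_of_mem_closure_range {ι X : Type*} [TopologicalSpace X] {f : ι → X}
    {φ : X → ℝ} (hφ : Continuous φ) (hbdd : BddBelow (Set.range (φ ∘ f))) {x : X}
    (hx : x ∈ closure (Set.range f)) : ⨅ i, φ (f i) ≤ φ x :=
  closure_minimal (t := {y | ⨅ i, φ (f i) ≤ φ y})
    (Set.range_subset_iff.2 fun i => ciInf_le hbdd i) (isClosed_le continuous_const hφ) hx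

section Tikhonov

variable {H K : Type*} [NormedAddCommGroup H] [InnerProductSpace ℝ H]
  [NormedAddCommGroup K] [InnerProductSpace ℝ K]

noncomputable def tikhonovObjective (S : H →L[ℝ] K) (α : ℝ) (r : K) (g : H) : ℝ :=
  (1/2) * (‖r - S g‖^2 + α^2 * ‖g‖^2)

variable (S : H →L[ℝ] K) (α : ℝ) (r : K)

theorem continuous_tikhonovObjective : Continuous (tikhonovObjective S α r) := by
  unfold tikhonovObjective
  fun_prop

theorem tikhonovObjective_nonneg (g : H) : 0 ≤ tikhonovObjective S α r g := by
  unfold tikhonovObjective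
  positivity

theorem bddBelow_range_tikhonovObjective_comp {ι : Type*} (f : ι → H) :
    BddBelow (Set.range (tikhonovObjective S α r ∘ f)) :=
  ⟨0, Set.forall_mem_range.2 fun i => tikhonovObjective_nonneg S α r (f i)⟩

theorem tikhonovObjective_le_of_apply_eq_of_norm_le {g g' : H} (hS : S g' = S g) (hnorm : ‖g'‖ ≤ ‖g‖) :
    tikhonovObjective S α r g' ≤ tikhonovObjective S α r g := by
  unfold tikhonovObjective
  rw [hS]
  gcongr

end Tikhonov

theorem wri_reduction_to_adjoint_range_general
    {H K : Type*} [NormedAddCommGroup H] [InnerProductSpace ℝ H] [CompleteSpace H]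
    [NormedAddCommGroup K] [InnerProductSpace ℝ K] [CompleteSpace K]
    (S : H →L[ℝ] K) (α : ℝ) (r : K) :
    (⨅ g : H, (1/2) * (‖r - S g‖^2 + α^2 * ‖g‖^2))
      = ⨅ e : K, (1/2) * (‖r - S ((ContinuousLinearMap.adjoint S) e)‖^2
          + α^2 * ‖(ContinuousLinearMap.adjoint S) e‖^2) := by
  change ⨅ g, tikhonovObjective S α r g = ⨅ e, tikhonovObjective S α r (adjoint S e)
  refine le_antisymm
    (le_ciInf fun e => ciInf_le (bddBelow_range_tikhonovObjective_comp S α r id) (adjoint S e))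
    (le_ciInf fun g => ?_)
  set x := S.kerᗮ.starProjection g
  have hx : x ∈ closure (Set.range (adjoint S)) := by
    have hmem : x ∈ S.kerᗮ := S.kerᗮ.starProjection_apply_mem g
    rw [S.orthogonal_ker, ← SetLike.mem_coe, Submodule.topologicalClosure_coe,
      LinearMap.coe_range, coe_coe] at hmem
    exact hmem
  calc ⨅ e, tikhonovObjective S α r (adjoint S e)
      ≤ tikhonovObjective S α r x :=
        ciInf_le_of_mem_closure_range (continuous_tikhonovObjective S α r)
          (bddBelow_range_tikhonovObjective_comp S α r _) hx
    _ ≤ tikhonovObjective S α r g :=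
        tikhonovObjective_le_of_apply_eq_of_norm_le S α r (S.apply_starProjection_orthogonal_ker g)
          (S.kerᗮ.norm_starProjection_apply_le g)

/-- Equation 20 of the paper: for surjective `S`, the infimum over all sources `g`
equals the infimum over sources of the form `S* e`. -/
theorem wri_reduction_to_adjoint_range
    {H K : Type*} [NormedAddCommGroup H] [InnerProductSpace ℝ H] [CompleteSpace H]
    [NormedAddCommGroup K] [InnerProductSpace ℝ K] [CompleteSpace K]
    (S : H →L[ℝ] K) (hS : Function.Surjective S) (α : ℝ) (hα : 0 < α) (r : K) :
    (⨅ g : H, (1/2) * (‖r - S g‖^2 + α^2 * ‖g‖^2))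
      = ⨅ e : K, (1/2) * (‖r - S ((ContinuousLinearMap.adjoint S) e)‖^2
          + α^2 * ‖(ContinuousLinearMap.adjoint S) e‖^2) :=
  wri_reduction_to_adjoint_range_general S α r
end

section
/- Assume c_* < c_max and that w₁ is not almost everywhere zero. Then the family of FWI objectives admits no uniform Lipschitz bound in c: for every K > 0 there exist λ ∈ (0, λ₀) and c ∈ (c_*, c_max] such that J_FWI^λ(c) − J_FWI^λ(c_*) > K·(c − c_*), where J_FWI^λ(c) = (1/2)·‖d_λ − S_p[c]w_λ‖²_{L²([0,T])}. In particular the derivatives with respect to c of the objectives J_FWI^λ are not bounded uniformly over λ ∈ (0, λ₀) and c ∈ [c_min, c_max]. (Non-smoothness consequence stated in the Discussion section.) -/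
open MeasureTheory Set

/-!
The prediction for `c > c_*` arrives earlier than the data by `τ(c_*) - τ(c) > 0`. Once the
wavelet length `λ` is below this gap (and below `λ₀`, so the data stays inside `[0, T]`), the
two wavelets have disjoint supports, so the misfit is at least `‖d_λ‖² / 2 = ‖w₁‖² / (8 c_*²)`:
a positive constant independent of `λ` and `c`, while `J(c_*) = 0`. Taking `c` close enough
to `c_*` and then `λ` small makes the difference quotient exceed any `K`.
-/

/-- `shiftedWavelet w lam τ` is the paper's `w_lam (· - τ)`; the data and the prediction of
`S_p[c]` are `1 / (2 c)` times it with `τ = |z_s - z_r| / c`. -/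
noncomputable def shiftedWavelet (w : ℝ → ℝ) (lam τ t : ℝ) : ℝ :=
  1 / Real.sqrt lam * w ((t - τ) / lam)

section ShiftedWavelet

variable {w : ℝ → ℝ} {lam τ : ℝ}

lemma support_shiftedWavelet_subset (hw : Function.support w ⊆ Ioo 0 1) (hlam : 0 < lam) :
    Function.support (shiftedWavelet w lam τ) ⊆ Ioo τ (τ + lam) := by
  intro t ht
  have hs := hw (right_ne_zero_of_mul ht)
  rw [mem_Ioo, div_pos_iff_of_pos_right hlam, div_lt_one hlam] at hs
  constructor <;> linarith [hs.1, hs.2]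

lemma continuous_shiftedWavelet (hw : Continuous w) : Continuous (shiftedWavelet w lam τ) := by
  unfold shiftedWavelet; fun_prop

lemma integral_shiftedWavelet_sq (hlam : 0 < lam) :
    ∫ t, shiftedWavelet w lam τ t ^ 2 = ∫ s, w s ^ 2 := by
  have hscale := Measure.integral_comp_div (fun s => w s ^ 2) lam
  have hshift := integral_sub_right_eq_self (μ := volume) (fun t => w (t / lam) ^ 2) τ
  simp only [shiftedWavelet, mul_pow, div_pow, one_pow, Real.sq_sqrt hlam.le]
  rw [integral_const_mul, hshift, hscale, abs_of_pos hlam, smul_eq_mul, ← mul_assoc,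
    one_div_mul_cancel hlam.ne', one_mul]

end ShiftedWavelet

lemma integral_sq_pos_of_not_ae_eq_zero {w : ℝ → ℝ} (hint : Integrable (fun s => w s ^ 2))
    (hne : ¬ w =ᵐ[volume] 0) : 0 < ∫ s, w s ^ 2 := by
  rw [integral_pos_iff_support_of_nonneg (fun s => sq_nonneg (w s)) hint]
  have hsupp : Function.support (fun s => w s ^ 2) = Function.support w :=
    Function.support_pow w two_ne_zero
  rw [hsupp, pos_iff_ne_zero]
  exact (Measure.measure_support_eq_zero_iff volume).not.mpr hne

lemma intervalIntegral_sq_le_sq_sub_of_mul_eq_zero {f g : ℝ → ℝ} {a b : ℝ} (hab : a ≤ b)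
    (hf : Continuous f) (hg : Continuous g) (hfg : ∀ t, f t * g t = 0) :
    ∫ t in a..b, f t ^ 2 ≤ ∫ t in a..b, (f t - g t) ^ 2 := by
  refine intervalIntegral.integral_mono_on hab ((hf.pow 2).intervalIntegrable _ _)
    (((hf.sub hg).pow 2).intervalIntegrable _ _) fun t _ => ?_
  nlinarith [hfg t, sq_nonneg (g t)]

lemma sq_mul_integral_sq_le_integral_sub_sq_shiftedWavelet {w : ℝ → ℝ} {lam τ₁ τ₂ T : ℝ}
    (hwc : Continuous w) (hws : Function.support w ⊆ Ioo 0 1) (hlam : 0 < lam)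
    (hτ₁ : 0 ≤ τ₁) (hτ₁T : τ₁ + lam ≤ T) (hsep : τ₂ + lam ≤ τ₁) (a b : ℝ) :
    a ^ 2 * ∫ s, w s ^ 2 ≤
      ∫ t in (0:ℝ)..T, (a * shiftedWavelet w lam τ₁ t - b * shiftedWavelet w lam τ₂ t) ^ 2 := by
  have hsupp₁ := support_shiftedWavelet_subset (τ := τ₁) hws hlam
  have hsupp₂ := support_shiftedWavelet_subset (τ := τ₂) hws hlam
  have hdisjoint : ∀ t, a * shiftedWavelet w lam τ₁ t * (b * shiftedWavelet w lam τ₂ t) = 0 := by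
    intro t
    by_contra h
    have h₁ := hsupp₁ (right_ne_zero_of_mul (left_ne_zero_of_mul h))
    have h₂ := hsupp₂ (right_ne_zero_of_mul (right_ne_zero_of_mul h))
    linarith [h₁.1, h₂.2]
  have hsuppT : Function.support (fun t => (a * shiftedWavelet w lam τ₁ t) ^ 2) ⊆ Ioc 0 T :=
    fun t ht => by
      have h₁ := hsupp₁ (right_ne_zero_of_mul (pow_ne_zero_iff two_ne_zero |>.mp ht))
      exact ⟨by linarith [h₁.1], by linarith [h₁.2]⟩
  calc a ^ 2 * ∫ s, w s ^ 2 = ∫ t, (a * shiftedWavelet w lam τ₁ t) ^ 2 := by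
        simp only [mul_pow, integral_const_mul, integral_shiftedWavelet_sq hlam]
    _ = ∫ t in (0:ℝ)..T, (a * shiftedWavelet w lam τ₁ t) ^ 2 :=
        (intervalIntegral.integral_eq_integral_of_support_subset hsuppT).symm
    _ ≤ _ := intervalIntegral_sq_le_sq_sub_of_mul_eq_zero (by linarith)
        (continuous_const.mul (continuous_shiftedWavelet hwc))
        (continuous_const.mul (continuous_shiftedWavelet hwc)) hdisjoint

lemma exists_mem_Ioc_mul_sub_lt {a b K M : ℝ} (hab : a < b) (hK : 0 < K) (hM : 0 < M) :
    ∃ c ∈ Ioc a b, K * (c - a) < M := by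
  have hstep : 0 < M / (2 * K) := by positivity
  refine ⟨min b (a + M / (2 * K)), ⟨lt_min hab (by linarith), min_le_left _ _⟩, ?_⟩
  calc K * (min b (a + M / (2 * K)) - a) ≤ K * (M / (2 * K)) := by
        gcongr; linarith [min_le_right b (a + M / (2 * K))]
    _ = M / 2 := by field_simp
    _ < M := half_lt_self hM

theorem fwi_no_uniform_lipschitz_bound_general
    (zs zr T cmin cmax cstar : ℝ) (w1 : ℝ → ℝ)
    (hzr : zs ≠ zr)
    (hcmin : 0 < cmin)
    (htransit : |zs - zr| / cmin < T)
    (hw1c : Continuous w1) (hw1s : Function.support w1 ⊆ Ioo 0 1)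
    (hw1ne : ¬ (w1 =ᵐ[volume] 0))
    (hcstar : cstar ∈ Icc cmin cmax) (hlt : cstar < cmax)
    (J : ℝ → ℝ → ℝ)
    (hJ : ∀ lam c, J lam c = (1/2) * ∫ t in (0:ℝ)..T,
        ((1/(2*cstar)) * ((1/Real.sqrt lam) * w1 ((t - |zs - zr| / cstar) / lam))
          - (1/(2*c)) * ((1/Real.sqrt lam) * w1 ((t - |zs - zr| / c) / lam))) ^ 2) :
    ∀ K > 0, ∃ lam ∈ Ioo 0 (T - |zs - zr| / cmin), ∃ c ∈ Ioc cstar cmax,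
      J lam c - J lam cstar > K * (c - cstar) := by
  intro K hK
  set D := |zs - zr|
  have hD : 0 < D := abs_pos.mpr (sub_ne_zero.mpr hzr)
  have hcstar0 : 0 < cstar := hcmin.trans_le hcstar.1
  have hcompact : HasCompactSupport (fun s => w1 s ^ 2) :=
    HasCompactSupport.intro (isCompact_Icc (a := 0) (b := 1)) fun s hs => by
      rw [Function.notMem_support.mp fun h => hs (Ioo_subset_Icc_self (hw1s h)),
        zero_pow two_ne_zero]
  have hE : 0 < ∫ s, w1 s ^ 2 := integral_sq_pos_of_not_ae_eq_zero
    ((hw1c.pow 2).integrable_of_hasCompactSupport hcompact) hw1ne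
  obtain ⟨c, hc, hKc⟩ := exists_mem_Ioc_mul_sub_lt hlt hK
    (by positivity : 0 < (1 / (2 * cstar)) ^ 2 * (∫ s, w1 s ^ 2) / 2)
  have hδ : 0 < D / cstar - D / c := sub_pos.mpr (div_lt_div_of_pos_left hD hcstar0 hc.1)
  obtain ⟨lam, hlam, hlam_lt⟩ := exists_between (lt_min (sub_pos.mpr htransit) hδ)
  obtain ⟨hlam₀, hlamδ⟩ := lt_min_iff.mp hlam_lt
  have hτ : D / cstar ≤ D / cmin := div_le_div_of_nonneg_left hD.le hcmin hcstar.1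
  have hfit := sq_mul_integral_sq_le_integral_sub_sq_shiftedWavelet (τ₁ := D / cstar)
    (τ₂ := D / c) (T := T) hw1c hw1s hlam (by positivity) (by linarith) (by linarith)
    (1 / (2 * cstar)) (1 / (2 * c))
  have hJstar : J lam cstar = 0 := by simp [hJ]
  have hJc : (1 / (2 * cstar)) ^ 2 * (∫ s, w1 s ^ 2) / 2 ≤ J lam c := by
    rw [hJ]
    unfold shiftedWavelet at hfit
    linarith
  exact ⟨lam, ⟨hlam, hlam₀⟩, c, hc, by linarith⟩

/-- Non-smoothness consequence from the Discussion section: the FWI objectives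
`J_FWI^lam` admit no uniform Lipschitz bound in `c` over `lam ∈ (0, lam₀)`,
hence their `c`-derivatives are not uniformly bounded. -/
theorem fwi_no_uniform_lipschitz_bound
    (zs zr T cmin cmax cstar : ℝ) (w1 : ℝ → ℝ)
    (hzr : zs ≠ zr) (hT : 0 < T)
    (hcmin : 0 < cmin) (hcc : cmin ≤ cmax)
    (htransit : |zs - zr| / cmin < T)
    (hw1c : Continuous w1) (hw1s : Function.support w1 ⊆ Ioo 0 1)
    (hw1ne : ¬ (w1 =ᵐ[volume] 0))
    (hcstar : cstar ∈ Icc cmin cmax) (hlt : cstar < cmax)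
    (J : ℝ → ℝ → ℝ)
    (hJ : ∀ lam c, J lam c = (1/2) * ∫ t in (0:ℝ)..T,
        ((1/(2*cstar)) * ((1/Real.sqrt lam) * w1 ((t - |zs - zr| / cstar) / lam))
          - (1/(2*c)) * ((1/Real.sqrt lam) * w1 ((t - |zs - zr| / c) / lam))) ^ 2) :
    ∀ K > 0, ∃ lam ∈ Ioo 0 (T - |zs - zr| / cmin), ∃ c ∈ Ioc cstar cmax,
      J lam c - J lam cstar > K * (c - cstar) :=
  fwi_no_uniform_lipschitz_bound_general zs zr T cmin cmax cstar w1 hzr hcmin htransit hw1c hw1s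
    hw1ne hcstar hlt J hJ
end
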